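/- Let p be a prime, let f = (f_1,…,f_t) be a polynomial mapping with f_1,…,f_t ∈ ℤ_p[x_1,…,x_n], let g ∈ ℤ_p[x_1,…,x_n], and suppose n ≥ t+1. Let k, l be positive integers and a ∈ ℤ_p^n such that f_i(a) ≡ 0 mod p for all i, g(a) ≡ 0 mod p, and the (t+1)×n Jacobian matrix of (f_1,…,f_t,g) at a has rank t+1 modulo p. Then the set A_{k,l} = {x ∈ a + (pℤ_p)^n : f_i(x) ≡ 0 mod p^k for all i, and g(x) ≡ 0 mod p^l} has Haar measure μ(A_{k,l}) = p^{−n−(k−1)t−l+1}. -/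

import Mathlib

open MeasureTheory MvPolynomial

/-!
Refine the coset `a + (pℤ_p)^n` one `p`-adic digit at a time. Fix exponents `e_i` and a centre
`b` at level `m ≥ 1` with `p^{min(e_i, m)} ∣ f_i(b)`, and write the points of the next level as
`b + p^m h` with `h ∈ F_p^n`. By the first-order Taylor expansion,
`p^{min(e_i, m+1)} ∣ f_i(b + p^m h)` is automatic when `e_i ≤ m`, and for `e_i > m` it is one
affine equation `(J h)_i = v_i`, where `J` is the Jacobian mod `p`, the same at every point of
`a + (pℤ_p)^n`. As `J` is surjective exactly `p^{n - s}` digits survive, `s = #{i | e_i > m}`,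
so each level scales the measure by `p^{-s}`; from level `max e_i` on the set is the whole
coset, of measure `p^{-mn}`. Take `(f_1, …, f_t, g)` with exponents `(k, …, k, l)`.
-/

noncomputable instance (p : ℕ) [Fact p.Prime] : MeasurableSpace ℤ_[p] := borel _
instance (p : ℕ) [Fact p.Prime] : BorelSpace ℤ_[p] := ⟨rfl⟩

/-- The Haar measure on `ℤ_p^n`, normalized so that `μ(ℤ_p^n) = 1`. -/
noncomputable def padicHaar (p : ℕ) [Fact p.Prime] (n : ℕ) : Measure (Fin n → ℤ_[p]) :=
  Measure.addHaarMeasure ⟨⟨Set.univ, isCompact_univ⟩, by simp⟩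

open Finset
open scoped ENNReal Matrix

namespace MvPolynomial

variable {R σ : Type*} [CommRing R]

theorem dvd_eval_sub_eval (f : MvPolynomial σ R) {c : R} {x y : σ → R}
    (hxy : ∀ j, c ∣ x j - y j) : c ∣ eval x f - eval y f := by
  induction f using MvPolynomial.induction_on with
  | C r => simp
  | add f g hf hg => simpa only [eval_add, add_sub_add_comm] using dvd_add hf hg
  | mul_X f i hf =>
    have key : eval x (f * X i) - eval y (f * X i)
        = (eval x f - eval y f) * x i + eval y f * (x i - y i) := by
      simp only [eval_mul, eval_X]; ring
    rw [key]
    exact dvd_add (hf.mul_right _) ((hxy i).mul_left _)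

theorem sq_dvd_eval_add_sub_sub_sum_pderiv [Fintype σ] (f : MvPolynomial σ R) {c : R}
    (b y : σ → R) (hy : ∀ j, c ∣ y j) :
    c ^ 2 ∣ eval (b + y) f - eval b f - ∑ j, eval b (pderiv j f) * y j := by
  classical
  induction f using MvPolynomial.induction_on with
  | C r => simp
  | add f g hf hg =>
    convert dvd_add hf hg using 1
    simp only [map_add, add_mul, sum_add_distrib]
    ring
  | mul_X f i hf =>
    have hsum : ∑ j, eval b (pderiv j (f * X i)) * y j
        = (∑ j, eval b (pderiv j f) * y j) * b i + eval b f * y i := by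
      simp only [pderiv_mul, pderiv_X, eval_add, eval_mul, eval_X, add_mul, sum_add_distrib,
        sum_mul, Pi.single_apply]
      congr 1
      · exact sum_congr rfl fun j _ => by ring
      · simp
    have key : eval (b + y) (f * X i) - eval b (f * X i) - ∑ j, eval b (pderiv j (f * X i)) * y j
        = (eval (b + y) f - eval b f - ∑ j, eval b (pderiv j f) * y j) * b i
          + (eval (b + y) f - eval b f) * y i := by
      rw [hsum]; simp only [eval_mul, eval_X, Pi.add_apply]; ring
    have hfirst : c ∣ eval (b + y) f - eval b f :=
      dvd_eval_sub_eval f fun j => by simpa using hy j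
    rw [key]
    exact dvd_add (hf.mul_right _) (sq c ▸ mul_dvd_mul hfirst (hy i))

end MvPolynomial

theorem AddMonoidHom.card_fiber_mul_card_of_surjective {G M : Type*} [AddGroup G] [AddGroup M]
    [Fintype G] [Fintype M] [DecidableEq M] (φ : G →+ M) (hφ : Function.Surjective φ) (y : M) :
    #{g | φ g = y} * Fintype.card M = Fintype.card G := by
  have hfib : ∀ y', #{g | φ g = y'} = #{g | φ g = y} := fun y' =>
    AddMonoidHom.card_fiber_eq_of_mem_range φ (hφ y') (hφ y)
  calc #{g | φ g = y} * Fintype.card M = ∑ y' : M, #{g | φ g = y'} := by simp [hfib, mul_comm]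
    _ = Fintype.card G := (card_eq_sum_card_fiberwise fun _ _ => mem_univ _).symm

namespace Matrix

variable {K ι σ : Type*} [Fintype ι] [Fintype σ]

theorem mulVecLin_surjective_of_rank_eq_card [Field K] {A : Matrix ι σ K}
    (hA : A.rank = Fintype.card ι) : Function.Surjective A.mulVecLin := by
  rw [← LinearMap.range_eq_top]
  apply Submodule.eq_top_of_finrank_eq
  rw [← Matrix.rank, hA, Module.finrank_fintype_fun_eq_card]

theorem card_filter_mulVec_eq_mul_card_pow [CommRing K] [Fintype K] [DecidableEq K]
    [DecidableEq σ] (A : Matrix ι σ K) (hA : Function.Surjective A.mulVecLin) (S : Finset ι)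
    (v : ι → K) :
    #{h : σ → K | ∀ i ∈ S, (A *ᵥ h) i = v i} * Fintype.card K ^ #S
      = Fintype.card K ^ Fintype.card σ := by
  classical
  let φ : (σ → K) →ₗ[K] (S → K) := (LinearMap.funLeft K K Subtype.val).comp A.mulVecLin
  have hφ : Function.Surjective φ :=
    (LinearMap.funLeft_surjective_of_injective K K _ Subtype.val_injective).comp hA
  have key := φ.toAddMonoidHom.card_fiber_mul_card_of_surjective hφ fun i => v i
  simp only [Fintype.card_fun, Fintype.card_coe] at key
  convert key using 3
  ext h
  simp [φ, _root_.funext_iff]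

end Matrix

theorem Finset.sum_tsub_eq_sum_tsub_succ_add_card {ι : Type*} (s : Finset ι) (e : ι → ℕ)
    (m : ℕ) :
    ∑ i ∈ s, (e i - m) = ∑ i ∈ s, (e i - (m + 1)) + #{i ∈ s | m < e i} := by
  rw [card_filter, ← sum_add_distrib]
  exact sum_congr rfl fun i _ => by split_ifs <;> omega

theorem ENNReal.natCast_mul_inv_pow_eq {p c s n N N' : ℕ} (hp : p ≠ 0) (hc : c * p ^ s = p ^ n)
    (hN : N' + s = N + n) : (c : ℝ≥0∞) * ((p : ℝ≥0∞) ^ N')⁻¹ = ((p : ℝ≥0∞) ^ N)⁻¹ := by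
  have hcN : c * p ^ N = p ^ N' := by
    refine Nat.eq_of_mul_eq_mul_right (pow_pos (Nat.pos_of_ne_zero hp) s) ?_
    rw [mul_right_comm, hc, ← pow_add, ← pow_add, hN, add_comm]
  have hc0 : (c : ℝ≥0∞) ≠ 0 := by
    rintro hc0
    rw [Nat.cast_eq_zero.1 hc0, zero_mul] at hc
    exact pow_ne_zero n hp hc.symm
  rw [← Nat.cast_pow, ← hcN, Nat.cast_mul, Nat.cast_pow,
    ENNReal.mul_inv (Or.inl hc0) (Or.inl (ENNReal.natCast_ne_top c)), ← mul_assoc,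
    ENNReal.mul_inv_cancel hc0 (ENNReal.natCast_ne_top c), one_mul]

namespace PadicInt

variable {p : ℕ} [Fact p.Prime]

theorem dvd_iff_toZMod_eq_zero {x : ℤ_[p]} : (p : ℤ_[p]) ∣ x ↔ toZMod x = 0 := by
  rw [← RingHom.mem_ker, ker_toZMod, maximalIdeal_eq_span_p, Ideal.mem_span_singleton]

theorem toZMod_natCast_val (z : ZMod p) : toZMod ((z.val : ℕ) : ℤ_[p]) = z := by
  simp

theorem pow_succ_dvd_pow_mul_iff {m : ℕ} {z : ℤ_[p]} :
    (p : ℤ_[p]) ^ (m + 1) ∣ p ^ m * z ↔ toZMod z = 0 := by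
  have hp : (p : ℤ_[p]) ≠ 0 := Nat.cast_ne_zero.2 (Fact.out : p.Prime).ne_zero
  rw [pow_succ, mul_dvd_mul_iff_left (pow_ne_zero _ hp), dvd_iff_toZMod_eq_zero]

theorem isClosed_setOf_pow_dvd (m : ℕ) : IsClosed {x : ℤ_[p] | (p : ℤ_[p]) ^ m ∣ x} := by
  simp_rw [← Ideal.mem_span_singleton, ← norm_le_pow_iff_mem_span_pow]
  exact isClosed_le continuous_norm continuous_const

variable {σ ι : Type*} {n : ℕ}

def cosetPow (m : ℕ) (b : σ → ℤ_[p]) : Set (σ → ℤ_[p]) := {x | ∀ j, (p : ℤ_[p]) ^ m ∣ x j - b j}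

noncomputable def addDigit (b : σ → ℤ_[p]) (m : ℕ) (h : σ → ZMod p) : σ → ℤ_[p] :=
  fun j => b j + (p : ℤ_[p]) ^ m * (h j).val

def congruenceSet (f : ι → MvPolynomial σ ℤ_[p]) (e : ι → ℕ) : Set (σ → ℤ_[p]) :=
  {x | ∀ i, (p : ℤ_[p]) ^ e i ∣ eval x (f i)}

noncomputable def jacobianModP (f : ι → MvPolynomial σ ℤ_[p]) (a : σ → ℤ_[p]) :
    Matrix ι σ (ZMod p) :=
  .of fun i j => toZMod (eval a (pderiv j (f i)))

theorem mem_cosetPow_trans {m m' : ℕ} {x b a : σ → ℤ_[p]} (hm : m' ≤ m) (hx : x ∈ cosetPow m b)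
    (hb : b ∈ cosetPow m' a) : x ∈ cosetPow m' a := fun j => by
  simpa using dvd_add ((pow_dvd_pow _ hm).trans (hx j)) (hb j)

theorem addDigit_mem_cosetPow (b : σ → ℤ_[p]) (m : ℕ) (h : σ → ZMod p) :
    addDigit b m h ∈ cosetPow m b := fun j => by simp [addDigit]

theorem cosetPow_eq_iUnion_addDigit (m : ℕ) (b : σ → ℤ_[p]) :
    cosetPow m b = ⋃ h : σ → ZMod p, cosetPow (m + 1) (addDigit b m h) := by
  ext x
  simp only [Set.mem_iUnion]
  refine ⟨fun hx => ?_,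
    fun ⟨h, hx⟩ => mem_cosetPow_trans m.le_succ hx (addDigit_mem_cosetPow b m h)⟩
  choose c hc using hx
  refine ⟨fun j => toZMod (c j), fun j => ?_⟩
  have hxj : x j - addDigit b m (fun j => toZMod (c j)) j
      = (p : ℤ_[p]) ^ m * (c j - ((toZMod (c j)).val : ℤ_[p])) := by
    rw [addDigit, mul_sub, ← hc j]; ring
  rw [hxj, pow_succ_dvd_pow_mul_iff, map_sub, toZMod_natCast_val, sub_self]

theorem pairwise_disjoint_cosetPow_addDigit (m : ℕ) (b : σ → ℤ_[p]) :
    Pairwise (Function.onFun Disjoint fun h : σ → ZMod p => cosetPow (m + 1) (addDigit b m h)) := by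
  intro h h' hne
  refine Set.disjoint_left.2 fun x hx hx' => hne (funext fun j => ?_)
  have hdiff : (x j - addDigit b m h' j) - (x j - addDigit b m h j)
      = (p : ℤ_[p]) ^ m * (((h j).val : ℤ_[p]) - (h' j).val) := by
    simp only [addDigit]; ring
  have hdvd := (hx' j).sub (hx j)
  rwa [hdiff, pow_succ_dvd_pow_mul_iff, map_sub, toZMod_natCast_val, toZMod_natCast_val,
    sub_eq_zero] at hdvd

theorem isClosed_cosetPow (m : ℕ) (b : σ → ℤ_[p]) : IsClosed (cosetPow m b) := by
  simp only [cosetPow, Set.ofPred_forall]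
  exact isClosed_iInter fun j =>
    (isClosed_setOf_pow_dvd m).preimage (f := fun x : σ → ℤ_[p] => x j - b j) (by fun_prop)

theorem isClosed_congruenceSet (f : ι → MvPolynomial σ ℤ_[p]) (e : ι → ℕ) :
    IsClosed (congruenceSet f e) := by
  simp only [congruenceSet, Set.ofPred_forall]
  exact isClosed_iInter fun i => (isClosed_setOf_pow_dvd (e i)).preimage (continuous_eval (f i))

instance : (padicHaar p n).IsAddHaarMeasure := by unfold padicHaar; infer_instance

theorem padicHaar_univ : padicHaar p n Set.univ = 1 :=
  Measure.addHaarMeasure_self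

theorem measure_cosetPow (m : ℕ) (b : Fin n → ℤ_[p]) :
    padicHaar p n (cosetPow m b) = ((p : ℝ≥0∞) ^ (m * n))⁻¹ := by
  let T : (Fin n → ℤ_[p]) →+ (Fin n → ZMod (p ^ m)) :=
    (toZModPow m : ℤ_[p] →+* ZMod (p ^ m)).toAddMonoidHom.compLeft (Fin n)
  have hker : (T.ker : Set (Fin n → ℤ_[p])) = cosetPow m 0 := by
    ext x
    simp [T, cosetPow, ← Ideal.mem_span_singleton, ← ker_toZModPow, _root_.funext_iff]
  have hindex : T.ker.index = p ^ (m * n) := by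
    rw [AddSubgroup.index_ker, AddMonoidHom.range_eq_top.2
      ((ZMod.ringHom_surjective (toZModPow m)).comp_left (α := Fin n)),
      AddSubgroup.card_top, Nat.card_eq_fintype_card]
    simp [pow_mul]
  have hmul :=
    T.ker.index_mul_measure (hker ▸ (isClosed_cosetPow m 0).measurableSet) (padicHaar p n)
  rw [padicHaar_univ, hindex, hker] at hmul
  have htrans : cosetPow m b = (fun x => -b + x) ⁻¹' cosetPow m 0 := by
    ext x
    simp [cosetPow, neg_add_eq_sub]
  rw [htrans, measure_preimage_add, ENNReal.eq_inv_of_mul_eq_one_left ((mul_comm _ _).trans hmul)]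
  push_cast
  rfl


theorem mem_cosetPow_comm {m : ℕ} {x b : σ → ℤ_[p]} : x ∈ cosetPow m b ↔ b ∈ cosetPow m x :=
  forall_congr' fun _ => dvd_sub_comm

theorem pow_dvd_eval_of_mem_cosetPow {f : MvPolynomial σ ℤ_[p]} {k m : ℕ} {x b : σ → ℤ_[p]}
    (hkm : k ≤ m) (hx : x ∈ cosetPow m b) (hb : (p : ℤ_[p]) ^ k ∣ eval b f) :
    (p : ℤ_[p]) ^ k ∣ eval x f := by
  simpa using dvd_add ((pow_dvd_pow _ hkm).trans (dvd_eval_sub_eval f hx)) hb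

theorem cosetPow_subset_congruenceSet {f : ι → MvPolynomial σ ℤ_[p]} {e : ι → ℕ} {m : ℕ}
    {b : σ → ℤ_[p]} (he : ∀ i, e i ≤ m) (hb : ∀ i, (p : ℤ_[p]) ^ e i ∣ eval b (f i)) :
    cosetPow m b ⊆ congruenceSet f e :=
  fun _ hx i => pow_dvd_eval_of_mem_cosetPow (he i) hx (hb i)

theorem pow_min_dvd_eval_of_mem {f : ι → MvPolynomial σ ℤ_[p]} {e : ι → ℕ} {m : ℕ}
    {x b : σ → ℤ_[p]} (hx : x ∈ cosetPow m b ∩ congruenceSet f e) (i : ι) :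
    (p : ℤ_[p]) ^ min (e i) m ∣ eval b (f i) :=
  pow_dvd_eval_of_mem_cosetPow (min_le_right _ _) (mem_cosetPow_comm.1 hx.1)
    ((pow_dvd_pow _ (min_le_left _ _)).trans (hx.2 i))

theorem jacobianModP_eq_of_mem_cosetPow {f : ι → MvPolynomial σ ℤ_[p]} {a b : σ → ℤ_[p]}
    (hb : b ∈ cosetPow 1 a) : jacobianModP f b = jacobianModP f a := by
  ext i j
  simp only [jacobianModP, Matrix.of_apply]
  rw [← sub_eq_zero, ← map_sub, ← dvd_iff_toZMod_eq_zero]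
  simpa using dvd_eval_sub_eval (pderiv j (f i)) hb

theorem pow_succ_dvd_eval_addDigit_iff [Fintype σ] {f : MvPolynomial σ ℤ_[p]} {b : σ → ℤ_[p]}
    {m : ℕ} {u : ℤ_[p]} (hm : 1 ≤ m) (hu : eval b f = p ^ m * u) (h : σ → ZMod p) :
    (p : ℤ_[p]) ^ (m + 1) ∣ eval (addDigit b m h) f
      ↔ toZMod u + ∑ j, toZMod (eval b (pderiv j f)) * h j = 0 := by
  obtain ⟨r, hr⟩ := sq_dvd_eval_add_sub_sub_sum_pderiv f b
    (fun j => (p : ℤ_[p]) ^ m * (h j).val) (fun _ => dvd_mul_right _ _)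
  have hsum : ∑ j, eval b (pderiv j f) * ((p : ℤ_[p]) ^ m * (h j).val)
      = p ^ m * ∑ j, eval b (pderiv j f) * (h j).val := by
    rw [mul_sum]
    exact sum_congr rfl fun _ _ => by ring
  rw [hsum, hu] at hr
  have key : eval (addDigit b m h) f
      = p ^ m * (u + ∑ j, eval b (pderiv j f) * (h j).val + p ^ m * r) := by
    show eval (b + fun j => (p : ℤ_[p]) ^ m * (h j).val) f = _
    linear_combination hr
  have hpm : toZMod ((p : ℤ_[p]) ^ m) = 0 := by simp [zero_pow (by omega : m ≠ 0)]
  rw [key, pow_succ_dvd_pow_mul_iff]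
  simp [hpm]

theorem exists_forall_pow_dvd_eval_addDigit_iff [Fintype σ] [Fintype ι]
    {f : ι → MvPolynomial σ ℤ_[p]} {e : ι → ℕ} {m : ℕ} {a b : σ → ℤ_[p]} (hm : 1 ≤ m)
    (hb : b ∈ cosetPow 1 a) (hfb : ∀ i, (p : ℤ_[p]) ^ min (e i) m ∣ eval b (f i)) :
    ∃ v : ι → ZMod p, ∀ h, (∀ i, (p : ℤ_[p]) ^ min (e i) (m + 1) ∣ eval (addDigit b m h) (f i))
      ↔ ∀ i ∈ ({i | m < e i} : Finset ι), (jacobianModP f a *ᵥ h) i = v i := by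
  choose u hu using hfb
  refine ⟨fun i => -toZMod (u i), fun h => forall_congr' fun i => ?_⟩
  rw [mem_filter_univ]
  rcases lt_or_ge m (e i) with hlt | hle
  · have hui := hu i
    rw [min_eq_right hlt.le] at hui
    rw [min_eq_right hlt, imp_iff_right hlt, ← jacobianModP_eq_of_mem_cosetPow hb,
      pow_succ_dvd_eval_addDigit_iff hm hui h, eq_neg_iff_add_eq_zero, add_comm]
    rfl
  · rw [min_eq_left (hle.trans m.le_succ)]
    have hui := hu i
    rw [min_eq_left hle] at hui
    simpa [hle.not_gt] using pow_dvd_eval_of_mem_cosetPow hle (addDigit_mem_cosetPow b m h)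
      (Dvd.intro _ hui.symm)

theorem measure_cosetPow_inter_congruenceSet [Fintype ι] (f : ι → MvPolynomial (Fin n) ℤ_[p])
    (e : ι → ℕ) (a : Fin n → ℤ_[p]) (hJ : Function.Surjective (jacobianModP f a).mulVecLin)
    (d m : ℕ) (b : Fin n → ℤ_[p]) (hm : 1 ≤ m) (he : ∀ i, e i ≤ m + d) (hb : b ∈ cosetPow 1 a)
    (hfb : ∀ i, (p : ℤ_[p]) ^ min (e i) m ∣ eval b (f i)) :
    padicHaar p n (cosetPow m b ∩ congruenceSet f e)
      = ((p : ℝ≥0∞) ^ (m * n + ∑ i, (e i - m)))⁻¹ := by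
  induction d generalizing m b with
  | zero =>
    simp only [add_zero] at he
    have hfb' : ∀ i, (p : ℤ_[p]) ^ e i ∣ eval b (f i) := fun i => min_eq_left (he i) ▸ hfb i
    rw [Set.inter_eq_left.2 (cosetPow_subset_congruenceSet he hfb'), measure_cosetPow,
      sum_eq_zero fun i _ => Nat.sub_eq_zero_of_le (he i), add_zero]
  | succ d ih =>
    obtain ⟨v, hv⟩ := exists_forall_pow_dvd_eval_addDigit_iff hm hb hfb
    have hpiece : ∀ h, padicHaar p n (cosetPow (m + 1) (addDigit b m h) ∩ congruenceSet f e)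
        = if ∀ i ∈ ({i | m < e i} : Finset ι), (jacobianModP f a *ᵥ h) i = v i
          then ((p : ℝ≥0∞) ^ ((m + 1) * n + ∑ i, (e i - (m + 1))))⁻¹ else 0 := by
      intro h
      split_ifs with hh
      · exact ih (m + 1) _ (by omega) (fun i => by have := he i; omega)
          (mem_cosetPow_trans hm (addDigit_mem_cosetPow b m h) hb) ((hv h).2 hh)
      · rw [Set.eq_empty_of_forall_notMem fun x hx => hh ((hv h).1 (pow_min_dvd_eval_of_mem hx)),
          measure_empty]
    rw [cosetPow_eq_iUnion_addDigit, Set.iUnion_inter,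
      measure_iUnion ((pairwise_disjoint_cosetPow_addDigit m b).mono fun _ _ hd =>
          hd.mono Set.inter_subset_left Set.inter_subset_left)
        fun h => ((isClosed_cosetPow _ _).inter (isClosed_congruenceSet f e)).measurableSet,
      tsum_fintype, sum_congr rfl fun h _ => hpiece h, sum_ite, sum_const_zero, add_zero,
      sum_const, nsmul_eq_mul]
    have hcount := (jacobianModP f a).card_filter_mulVec_eq_mul_card_pow hJ {i | m < e i} v
    rw [ZMod.card, Fintype.card_fin] at hcount
    refine ENNReal.natCast_mul_inv_pow_eq (Fact.out : p.Prime).ne_zero hcount ?_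
    rw [sum_tsub_eq_sum_tsub_succ_add_card _ e m]
    ring

theorem measure_cosetPow_one_inter_congruenceSet [Fintype ι]
    (f : ι → MvPolynomial (Fin n) ℤ_[p]) (e : ι → ℕ) (a : Fin n → ℤ_[p])
    (hfa : ∀ i, (p : ℤ_[p]) ∣ eval a (f i))
    (hJ : Function.Surjective (jacobianModP f a).mulVecLin) :
    padicHaar p n (cosetPow 1 a ∩ congruenceSet f e)
      = ((p : ℝ≥0∞) ^ (n + ∑ i, (e i - 1)))⁻¹ := by
  simpa using measure_cosetPow_inter_congruenceSet f e a hJ (∑ i, e i) 1 a le_rfl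
    (fun i => le_add_left (single_le_sum (fun _ _ => Nat.zero_le _) (mem_univ i)))
    (fun j => by simp)
    (fun i => (pow_dvd_pow _ (min_le_right _ _)).trans (by simpa using hfa i))

end PadicInt

theorem measure_Akl_map_general (p : ℕ) [Fact p.Prime] (n t : ℕ)
    (F : Fin t → MvPolynomial (Fin n) ℤ_[p]) (g : MvPolynomial (Fin n) ℤ_[p])
    (k l : ℕ) (hk : 1 ≤ k) (hl : 1 ≤ l) (a : Fin n → ℤ_[p])
    (hFa : ∀ i, (p : ℤ_[p]) ∣ eval a (F i)) (hga : (p : ℤ_[p]) ∣ eval a g)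
    (hrank : Matrix.rank (Matrix.of fun (i : Fin (t + 1)) (j : Fin n) =>
      Fin.lastCases (motive := fun _ => ZMod p)
        (PadicInt.toZMod (eval a (pderiv j g)))
        (fun i' => PadicInt.toZMod (eval a (pderiv j (F i')))) i) = t + 1) :
    padicHaar p n {x : Fin n → ℤ_[p] | (∀ i, (p : ℤ_[p]) ∣ (x i - a i)) ∧
        (∀ i, (p : ℤ_[p]) ^ k ∣ eval x (F i)) ∧ (p : ℤ_[p]) ^ l ∣ eval x g}
      = (p : ENNReal) ^ (-(n : ℤ) - ((k : ℤ) - 1) * t - (l : ℤ) + 1) := by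
  let f : Fin (t + 1) → MvPolynomial (Fin n) ℤ_[p] := Fin.lastCases g F
  let e : Fin (t + 1) → ℕ := Fin.lastCases l fun _ => k
  have hJ : (PadicInt.jacobianModP f a).rank = Fintype.card (Fin (t + 1)) := by
    convert hrank using 3
    · ext i j
      induction i using Fin.lastCases <;> simp [f, PadicInt.jacobianModP]
    · exact Fintype.card_fin _
  have hset : {x : Fin n → ℤ_[p] | (∀ i, (p : ℤ_[p]) ∣ (x i - a i)) ∧
      (∀ i, (p : ℤ_[p]) ^ k ∣ eval x (F i)) ∧ (p : ℤ_[p]) ^ l ∣ eval x g}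
      = PadicInt.cosetPow 1 a ∩ PadicInt.congruenceSet f e := by
    ext x
    simp [PadicInt.cosetPow, PadicInt.congruenceSet, Fin.forall_fin_succ', f, e]
  have hfa : ∀ i, (p : ℤ_[p]) ∣ eval a (f i) :=
    Fin.forall_fin_succ'.2 (by simpa [f] using ⟨hFa, hga⟩)
  rw [hset, PadicInt.measure_cosetPow_one_inter_congruenceSet f e a hfa
    (Matrix.mulVecLin_surjective_of_rank_eq_card hJ), Fin.sum_univ_castSucc, ← zpow_natCast,
    ← ENNReal.zpow_neg]
  simp only [e, Fin.lastCases_castSucc, Fin.lastCases_last, sum_const, card_univ,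
    Fintype.card_fin, smul_eq_mul]
  congr 1
  push_cast [Nat.cast_sub hk, Nat.cast_sub hl]
  ring

theorem measure_Akl_map (p : ℕ) [Fact p.Prime] (n t : ℕ) (hnt : t + 1 ≤ n)
    (F : Fin t → MvPolynomial (Fin n) ℤ_[p]) (g : MvPolynomial (Fin n) ℤ_[p])
    (k l : ℕ) (hk : 1 ≤ k) (hl : 1 ≤ l) (a : Fin n → ℤ_[p])
    (hFa : ∀ i, (p : ℤ_[p]) ∣ eval a (F i)) (hga : (p : ℤ_[p]) ∣ eval a g)
    (hrank : Matrix.rank (Matrix.of fun (i : Fin (t + 1)) (j : Fin n) =>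
      Fin.lastCases (motive := fun _ => ZMod p)
        (PadicInt.toZMod (eval a (pderiv j g)))
        (fun i' => PadicInt.toZMod (eval a (pderiv j (F i')))) i) = t + 1) :
    padicHaar p n {x : Fin n → ℤ_[p] | (∀ i, (p : ℤ_[p]) ∣ (x i - a i)) ∧
        (∀ i, (p : ℤ_[p]) ^ k ∣ eval x (F i)) ∧ (p : ℤ_[p]) ^ l ∣ eval x g}
      = (p : ENNReal) ^ (-(n : ℤ) - ((k : ℤ) - 1) * t - (l : ℤ) + 1) :=
  measure_Akl_map_general p n t F g k l hk hl a hFa hga hrank
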